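/- arXiv:2005.05475 — 5 statements merged into one kernel-verified Lean document; each statement's English description precedes it below -/
import Mathlib

section
/- Let 𝒱¹₄ := {2r : r odd positive integer and A(2r) = 4}. Then |𝒱¹₄(x)| / √x → 0 as x → ∞. -/
open Filter Topology
open scoped Classical

noncomputable section

/-- The multiplicity `A(m)`: the number of positive integers `n` with `φ(n) = m`. -/
def totA (m : ℕ) : ℕ := Set.ncard {n : ℕ | 0 < n ∧ n.totient = m}

/-- The set of totients `𝒱`. -/
def totV : Set ℕ := {m : ℕ | ∃ n : ℕ, 0 < n ∧ n.totient = m}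

/-- The stratum `𝒱^ℓ` of totients congruent to `2^ℓ` mod `2^(ℓ+1)`. -/
def totVl (ℓ : ℕ) : Set ℕ := {m ∈ totV | m % 2 ^ (ℓ + 1) = 2 ^ ℓ}

/-- `U(x)`: the number of elements of `U` not exceeding `x`. -/
def countUpTo (U : Set ℕ) (x : ℝ) : ℕ := Set.ncard {n ∈ U | (n : ℝ) ≤ x}

/-- `π(x)`: the number of primes not exceeding `x`. -/
def primePi (x : ℝ) : ℕ := Set.ncard {p : ℕ | p.Prime ∧ (p : ℝ) ≤ x}

/-- `S^ℓ(x) = Σ_{m ∈ 𝒱^ℓ, m ≤ x} A(m)`. -/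
def totS (ℓ : ℕ) (x : ℝ) : ℕ :=
  ∑ m ∈ Finset.range (⌊x⌋₊ + 1), if m ∈ totVl ℓ then totA m else 0

end

/-!
Two coprime divisors `a, b > 2` of `n` would make `4 ∣ φ(a) φ(b) = φ(ab) ∣ φ(n)`. So if
`m = φ(n) ≡ 2 (mod 4)`, then `n = p^a c` with `p` prime and `c ∈ {1, 2}`, and `m = p^(a-1) (p-1)`.
For `a = 1` this leaves only `n ∈ {m + 1, 2(m + 1)}`; hence `A(m) = 4` forces `m = q^k (q-1)` with
`q` prime and `k ≥ 1`. Up to `x` there are at most `π(√x + 1)` such values with `k = 1`, which is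
`o(√x)` by Chebyshev's bound, and `O(x^(1/3) log x)` with `k ≥ 2`, since then `(q-1)^3 ≤ x` and
`2^k ≤ x`.
-/

namespace Nat

theorem four_dvd_totient_of_coprime_mul_dvd {a b n : ℕ} (hab : a.Coprime b) (ha : 2 < a)
    (hb : 2 < b) (h : a * b ∣ n) : 4 ∣ φ n :=
  calc 4 = 2 * 2 := rfl
    _ ∣ φ a * φ b := mul_dvd_mul (totient_even ha).two_dvd (totient_even hb).two_dvd
    _ ∣ φ n := totient_mul hab ▸ totient_dvd_of_dvd h

theorem exists_prime_pow_mul_eq_of_not_four_dvd_totient {n : ℕ} (hn : 2 < n) (h : ¬ 4 ∣ φ n) :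
    ∃ p a c, p.Prime ∧ 0 < a ∧ c ∣ 2 ∧ (p ^ a).Coprime c ∧ n = p ^ a * c := by
  have hn0 : n ≠ 0 := by omega
  by_cases hodd : ∃ p, p.Prime ∧ p ∣ n ∧ p ≠ 2
  · obtain ⟨p, hp, hpn, hp2⟩ := hodd
    have ha : 0 < n.factorization p := hp.factorization_pos_of_dvd hn0 hpn
    have hcop : (p ^ n.factorization p).Coprime (n / p ^ n.factorization p) :=
      (coprime_ordCompl hp hn0).pow_left _
    have hc : n / p ^ n.factorization p ≤ 2 := by
      by_contra! hc
      refine h (four_dvd_totient_of_coprime_mul_dvd hcop ?_ hc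
        (ordProj_mul_ordCompl_eq_self n p).dvd)
      exact (lt_of_le_of_ne hp.two_le hp2.symm).trans_le (le_self_pow ha.ne' p)
    refine ⟨p, _, _, hp, ha, ?_, hcop, (ordProj_mul_ordCompl_eq_self n p).symm⟩
    have hc_pos := ordCompl_pos p hn0
    interval_cases n / p ^ n.factorization p
    · exact one_dvd 2
    · exact dvd_rfl
  · push Not at hodd
    have h2pow := eq_prime_pow_of_unique_prime_dvd hn0 fun hd hdn => hodd _ hd hdn
    refine ⟨2, _, 1, prime_two, Nat.pos_of_ne_zero fun h0 => ?_, one_dvd 2, coprime_one_right _,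
      h2pow.trans (mul_one _).symm⟩
    rw [h0, pow_zero] at h2pow
    omega

theorem totient_eq_prime_pow_mul_or_of_not_four_dvd {n : ℕ} (hn : 2 < n) (h : ¬ 4 ∣ φ n) :
    n = φ n + 1 ∨ n = 2 * (φ n + 1) ∨ ∃ q k, q.Prime ∧ 0 < k ∧ φ n = q ^ k * (q - 1) := by
  obtain ⟨p, a, c, hp, ha, hc2, hcop, rfl⟩ := exists_prime_pow_mul_eq_of_not_four_dvd_totient hn h
  obtain ⟨k, rfl⟩ := exists_eq_add_one_of_ne_zero ha.ne'
  have hc : c = 1 ∨ c = 2 := (dvd_prime prime_two).mp hc2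
  rw [totient_mul hcop, totient_prime_pow_succ hp, totient_eq_one_iff.mpr hc, mul_one]
  rcases Nat.eq_zero_or_pos k with rfl | hk
  · have := hp.one_le
    rcases hc with rfl | rfl <;> simp only [zero_add, pow_zero, pow_one, one_mul, mul_one] <;> omega
  · exact Or.inr (Or.inr ⟨p, k, hp, hk, rfl⟩)

end Nat

theorem exists_eq_prime_pow_mul_of_two_lt_totA {m : ℕ} (hm : m % 4 = 2) (hA : 2 < totA m) :
    ∃ q k, q.Prime ∧ 0 < k ∧ m = q ^ k * (q - 1) := by
  by_contra! hform
  have hsub : {n : ℕ | 0 < n ∧ n.totient = m} ⊆ {m + 1, 2 * (m + 1)} := by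
    rintro n ⟨-, rfl⟩
    have hn : 2 < n := by
      by_contra! hn
      interval_cases n <;> simp at hm
    rcases Nat.totient_eq_prime_pow_mul_or_of_not_four_dvd hn (by omega) with
      h | h | ⟨q, k, hq, hk, h⟩
    · exact Or.inl h
    · exact Or.inr h
    · exact absurd h (hform q k hq hk)
  have : totA m ≤ 2 :=
    calc totA m ≤ ({m + 1, 2 * (m + 1)} : Set ℕ).ncard := Set.ncard_le_ncard hsub (Set.toFinite _)
      _ ≤ 2 := (Set.ncard_insert_le _ _).trans (by rw [Set.ncard_singleton])
  omega

/-- The values `φ (q ^ (k + 1)) = q ^ k * (q - 1)` for `q` prime and `k ≥ 1`. -/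
def highPrimePowerTotients : Set ℕ := {m | ∃ q k, q.Prime ∧ 0 < k ∧ m = q ^ k * (q - 1)}

theorem countUpTo_mono {U V : Set ℕ} (h : U ⊆ V) (x : ℝ) : countUpTo U x ≤ countUpTo V x :=
  Set.ncard_le_ncard (fun _ hn => ⟨h hn.1, hn.2⟩)
    ((Set.finite_Iic ⌊x⌋₊).subset fun _ hn => Nat.le_floor hn.2)

open Finset in
theorem countUpTo_highPrimePowerTotients_le (x : ℝ) :
    countUpTo highPrimePowerTotients x ≤
      Nat.primeCounting (Nat.sqrt ⌊x⌋₊ + 1) + (⌊x ^ (3⁻¹ : ℝ)⌋₊ + 2) * (Nat.log 2 ⌊x⌋₊ + 1) := by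
  set N := ⌊x⌋₊
  set Q := ⌊x ^ (3⁻¹ : ℝ)⌋₊
  let S₁ := (Nat.primesLE (N.sqrt + 1)).image fun q => q ^ 1 * (q - 1)
  let S₂ := (range (Q + 2) ×ˢ range (Nat.log 2 N + 1)).image fun qk => qk.1 ^ qk.2 * (qk.1 - 1)
  have hsub : {m ∈ highPrimePowerTotients | (m : ℝ) ≤ x} ⊆ ↑(S₁ ∪ S₂) := by
    rintro _ ⟨⟨q, k, hq, hk, rfl⟩, hx⟩
    have hN : q ^ k * (q - 1) ≤ N := Nat.le_floor hx
    have hq1 : 0 < q - 1 := Nat.sub_pos_of_lt hq.one_lt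
    rcases (by omega : k = 1 ∨ 2 ≤ k) with rfl | hk2
    · have hsq : (q - 1) ^ 2 ≤ N := (sq (q - 1)).trans_le
        ((Nat.mul_le_mul_right _ (Nat.sub_le q 1)).trans (by simpa using hN))
      have hq_sqrt := Nat.le_sqrt'.mpr hsq
      exact coe_subset.mpr subset_union_left
        (mem_image.mpr ⟨q, Nat.mem_primesLE.mpr ⟨by omega, hq⟩, rfl⟩)
    · have hlog : k ≤ Nat.log 2 N := Nat.le_log_of_pow_le one_lt_two
        ((Nat.pow_le_pow_left hq.two_le k).trans ((Nat.le_mul_of_pos_right _ hq1).trans hN))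
      have hcube : (q - 1) ^ 3 ≤ N :=
        calc (q - 1) ^ 3 = (q - 1) ^ 2 * (q - 1) := pow_succ _ 2
          _ ≤ q ^ k * (q - 1) := Nat.mul_le_mul_right _
              ((Nat.pow_le_pow_left (Nat.sub_le q 1) 2).trans (Nat.pow_le_pow_right hq.pos hk2))
          _ ≤ N := hN
      have hQ : q - 1 ≤ Q := by
        have hx0 : 0 ≤ x := (Nat.cast_nonneg _).trans hx
        refine Nat.le_floor ((Real.le_rpow_inv_iff_of_pos (Nat.cast_nonneg _) hx0 three_pos).mpr ?_)
        rw [show (3 : ℝ) = (3 : ℕ) by norm_num, Real.rpow_natCast]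
        exact_mod_cast (Nat.cast_le.mpr hcube).trans (Nat.floor_le hx0)
      exact coe_subset.mpr subset_union_right (mem_image.mpr
        ⟨(q, k), mem_product.mpr ⟨mem_range.mpr (by omega), mem_range.mpr (by omega)⟩, rfl⟩)
  calc countUpTo highPrimePowerTotients x ≤ (S₁ ∪ S₂).card := by
        rw [← Set.ncard_coe_finset]
        exact Set.ncard_le_ncard hsub (finite_toSet _)
    _ ≤ S₁.card + S₂.card := card_union_le _ _
    _ ≤ _ := add_le_add (card_image_le.trans (Nat.primesLE_card_eq_primeCounting _).le)
        (card_image_le.trans (by simp))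

open Asymptotics Real

theorem isLittleO_primeCounting_floor :
    (fun y : ℝ => (Nat.primeCounting ⌊y⌋₊ : ℝ)) =o[atTop] id := by
  have hlim : Tendsto (fun y => (log 4 + 1) / log y) atTop (𝓝 0) :=
    tendsto_const_nhds.div_atTop tendsto_log_atTop
  refine isLittleO_of_tendsto' (Eventually.of_forall fun y hy => ?_) (squeeze_zero' ?_ ?_ hlim)
  · simp [show y = 0 from hy]
  · filter_upwards [eventually_ge_atTop 0] with y hy
    positivity
  · filter_upwards [Chebyshev.eventually_primeCounting_le one_pos, eventually_gt_atTop 1]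
      with y hπ hy
    rw [id, div_le_div_iff₀ (by linarith) (log_pos hy)]
    rwa [le_div_iff₀ (log_pos hy)] at hπ

theorem isLittleO_primeCounting_floor_sqrt_add_one :
    (fun x : ℝ => (Nat.primeCounting ⌊√x + 1⌋₊ : ℝ)) =o[atTop] (√·) := by
  have hsqrt : Tendsto (fun x => ‖√x‖) atTop atTop :=
    tendsto_norm_atTop_atTop.comp tendsto_sqrt_atTop
  refine (isLittleO_primeCounting_floor.comp_tendsto
    (tendsto_atTop_add_const_right _ 1 tendsto_sqrt_atTop)).trans_isBigO ?_
  exact (isBigO_refl _ _).add ((isLittleO_const_left.mpr (Or.inr hsqrt)).isBigO)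

theorem isLittleO_rpow_add_mul_logb_add :
    (fun x : ℝ => (x ^ (3⁻¹ : ℝ) + 2) * (logb 2 x + 1)) =o[atTop] (√·) := by
  have hnorm (r : ℝ) (hr : 0 < r) : Tendsto (fun x : ℝ => ‖x ^ r‖) atTop atTop :=
    tendsto_norm_atTop_atTop.comp (tendsto_rpow_atTop hr)
  have h₁ : (fun x : ℝ => x ^ (3⁻¹ : ℝ) + 2) =O[atTop] fun x => x ^ (3⁻¹ : ℝ) :=
    (isBigO_refl _ _).add (isLittleO_const_left.mpr (Or.inr (hnorm _ (by norm_num)))).isBigO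
  have h₂ : (fun x : ℝ => logb 2 x + 1) =o[atTop] fun x => x ^ (6⁻¹ : ℝ) := by
    refine IsLittleO.add ?_ (isLittleO_const_left.mpr (Or.inr (hnorm _ (by norm_num))))
    refine ((isLittleO_log_rpow_atTop (by norm_num)).const_mul_left (log 2)⁻¹).congr_left ?_
    intro x
    rw [logb, div_eq_inv_mul]
  refine (h₁.mul_isLittleO h₂).congr' (Eventually.of_forall fun _ => rfl) ?_
  filter_upwards [eventually_ge_atTop 0] with x hx
  rw [← rpow_add' hx (by norm_num), sqrt_eq_rpow]
  norm_num

theorem isLittleO_countUpTo_highPrimePowerTotients :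
    (fun x : ℝ => (countUpTo highPrimePowerTotients x : ℝ)) =o[atTop] (√·) := by
  refine IsBigO.trans_isLittleO (IsBigO.of_bound 1 ?_)
    (isLittleO_primeCounting_floor_sqrt_add_one.add isLittleO_rpow_add_mul_logb_add)
  filter_upwards [eventually_ge_atTop 1] with x hx
  have hx0 : 0 ≤ x := by linarith
  have hsqrt : Nat.sqrt ⌊x⌋₊ + 1 ≤ ⌊√x + 1⌋₊ := by
    rw [Nat.floor_add_one (sqrt_nonneg x)]
    exact Nat.add_le_add_right (Nat.le_floor (nat_sqrt_le_real_sqrt.trans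
      (sqrt_le_sqrt (Nat.floor_le hx0)))) 1
  have hQ : (⌊x ^ (3⁻¹ : ℝ)⌋₊ : ℝ) ≤ x ^ (3⁻¹ : ℝ) := Nat.floor_le (by positivity)
  have hlog : (Nat.log 2 ⌊x⌋₊ : ℝ) ≤ logb 2 x := by
    refine (natLog_le_logb _ _).trans (logb_le_logb_of_le one_lt_two ?_ (Nat.floor_le hx0))
    exact_mod_cast Nat.floor_pos.mpr hx
  have hlog0 : 0 ≤ logb 2 x := logb_nonneg one_lt_two hx
  rw [one_mul, norm_natCast, norm_of_nonneg (by positivity)]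
  calc (countUpTo highPrimePowerTotients x : ℝ)
      ≤ ((Nat.primeCounting (Nat.sqrt ⌊x⌋₊ + 1) +
          (⌊x ^ (3⁻¹ : ℝ)⌋₊ + 2) * (Nat.log 2 ⌊x⌋₊ + 1) : ℕ) : ℝ) := 
        by exact_mod_cast countUpTo_highPrimePowerTotients_le x
    _ ≤ Nat.primeCounting ⌊√x + 1⌋₊ + (x ^ (3⁻¹ : ℝ) + 2) * (logb 2 x + 1) := by
        push_cast
        gcongr
        exact Nat.monotone_primeCounting hsqrt

/-- With `𝒱¹₄ = {2r : r odd positive, A(2r) = 4}`, one has `|𝒱¹₄(x)|/√x → 0`. -/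
theorem stmt_2 :
    Tendsto
      (fun x : ℝ =>
        (countUpTo {m : ℕ | ∃ r : ℕ, 0 < r ∧ Odd r ∧ totA (2 * r) = 4 ∧ m = 2 * r} x : ℝ)
          / Real.sqrt x)
      atTop (nhds 0) := by
  have hsub : {m : ℕ | ∃ r : ℕ, 0 < r ∧ Odd r ∧ totA (2 * r) = 4 ∧ m = 2 * r} ⊆
      highPrimePowerTotients := by
    rintro _ ⟨r, -, ⟨j, rfl⟩, hA, rfl⟩
    exact exists_eq_prime_pow_mul_of_two_lt_totA (by omega) (by omega)
  refine IsLittleO.tendsto_div_nhds_zero ?_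
  refine IsBigO.trans_isLittleO (IsBigO.of_bound 1 (Eventually.of_forall fun x => ?_))
    isLittleO_countUpTo_highPrimePowerTotients
  simpa using countUpTo_mono hsub x
end

section
/- If there exists a positive integer ℓ₀ such that the set of multiplicities {A(m) : m ∈ 𝒱^{ℓ₀}} is unbounded, then for every integer n ≥ 0 the set of multiplicities {A(m) : m ∈ 𝒱^{ℓ₀+n}} is unbounded. -/
open Filter Topology
open scoped Classical

/-
Sending each preimage `n` of `m` under `φ` to `2n` if `n` is even and to `4n` if `n` is odd gives
a preimage of `2m`; each of the two rules is injective, so `A(m) ≤ 2 A(2m)`. Since doubling maps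
`𝒱^ℓ` into `𝒱^{ℓ+1}`, unboundedness of `A` on `𝒱^ℓ` passes to `𝒱^{ℓ+1}`. Finiteness of the fibres
of `φ`, needed to compare cardinalities, comes from `n ≤ φ(n) (φ(n) + 1)!`: every prime `p ∣ n`
has `p - 1 ∣ φ(n)`.
-/

open scoped Nat

open Finset in
theorem Nat.le_totient_mul_factorial (n : ℕ) : n ≤ φ n * (φ n + 1)! := by
  rcases Nat.eq_zero_or_pos n with rfl | hn
  · exact Nat.zero_le _
  have hsub : n.primeFactors ⊆ Ico 1 (φ n + 1 + 1) := fun p hp => by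
    have hprime := Nat.prime_of_mem_primeFactors hp
    have hdvd : φ p ∣ φ n := Nat.totient_dvd_of_dvd (Nat.dvd_of_mem_primeFactors hp)
    rw [Nat.totient_prime hprime] at hdvd
    have := Nat.le_of_dvd (Nat.totient_pos.2 hn) hdvd
    have := hprime.two_le
    simp only [mem_Ico]
    omega
  have hprod_pos : 0 < ∏ p ∈ n.primeFactors, (p - 1) :=
    prod_pos fun p hp => by have := (Nat.prime_of_mem_primeFactors hp).two_le; omega
  calc n ≤ n * ∏ p ∈ n.primeFactors, (p - 1) := Nat.le_mul_of_pos_right n hprod_pos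
    _ = φ n * ∏ p ∈ n.primeFactors, p := (Nat.totient_mul_prod_primeFactors n).symm
    _ ≤ φ n * ∏ p ∈ Ico 1 (φ n + 1 + 1), p := by
      gcongr
      exact fun p hp _ => (mem_Ico.1 hp).1
    _ = φ n * (φ n + 1)! := by rw [prod_Ico_id_eq_factorial]

theorem Nat.finite_setOf_totient_eq (m : ℕ) : {n | φ n = m}.Finite :=
  (Set.finite_Iic (m * (m + 1)!)).subset fun n (hn : φ n = m) =>
    hn ▸ n.le_totient_mul_factorial

theorem Nat.totient_four_mul_of_odd {n : ℕ} (hn : Odd n) : φ (4 * n) = 2 * φ n := by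
  rw [show 4 * n = 2 * (2 * n) by ring, Nat.totient_two_mul_of_even (even_two_mul n),
    Nat.totient_two_mul_of_odd hn]

theorem two_mul_mem_totV {m : ℕ} (hm : m ∈ totV) : 2 * m ∈ totV := by
  obtain ⟨n, hn, rfl⟩ := hm
  rcases Nat.even_or_odd n with heven | hodd
  · exact ⟨2 * n, by omega, Nat.totient_two_mul_of_even heven⟩
  · exact ⟨4 * n, by omega, Nat.totient_four_mul_of_odd hodd⟩

theorem two_mul_mem_totVl_succ {ℓ m : ℕ} (hm : m ∈ totVl ℓ) : 2 * m ∈ totVl (ℓ + 1) := by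
  refine ⟨two_mul_mem_totV hm.1, ?_⟩
  rw [pow_succ', Nat.mul_mod_mul_left, hm.2, pow_succ']

theorem totA_le_two_mul_totA_two_mul (m : ℕ) : totA m ≤ 2 * totA (2 * m) := by
  set S := {n : ℕ | 0 < n ∧ φ n = m}
  set T := {n : ℕ | 0 < n ∧ φ n = 2 * m}
  have hT : T.Finite := (Nat.finite_setOf_totient_eq _).subset fun n hn => hn.2
  have hodd : {n ∈ S | Odd n}.ncard ≤ T.ncard :=
    Set.ncard_le_ncard_of_injOn (4 * ·) (fun n ⟨⟨hpos, hφ⟩, hn⟩ =>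
      ⟨by omega, by rw [Nat.totient_four_mul_of_odd hn, hφ]⟩)
      (mul_right_injective₀ four_ne_zero).injOn hT
  have heven : {n ∈ S | Even n}.ncard ≤ T.ncard :=
    Set.ncard_le_ncard_of_injOn (2 * ·) (fun n ⟨⟨hpos, hφ⟩, hn⟩ =>
      ⟨by omega, by rw [Nat.totient_two_mul_of_even hn, hφ]⟩)
      (mul_right_injective₀ two_ne_zero).injOn hT
  have hsplit : S = {n ∈ S | Odd n} ∪ {n ∈ S | Even n} := by
    ext n
    have := Nat.even_or_odd n
    simp only [Set.mem_union, Set.mem_sep_iff]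
    tauto
  calc totA m = S.ncard := rfl
    _ ≤ {n ∈ S | Odd n}.ncard + {n ∈ S | Even n}.ncard :=
      (congrArg Set.ncard hsplit).le.trans (Set.ncard_union_le _ _)
    _ ≤ 2 * T.ncard := by omega

theorem exists_mem_totVl_succ_le_totA {ℓ : ℕ} (h : ∀ N : ℕ, ∃ m ∈ totVl ℓ, N ≤ totA m)
    (N : ℕ) : ∃ m ∈ totVl (ℓ + 1), N ≤ totA m := by
  obtain ⟨m, hm, hN⟩ := h (2 * N)
  exact ⟨2 * m, two_mul_mem_totVl_succ hm, by
    have := totA_le_two_mul_totA_two_mul m; omega⟩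

theorem stmt_7_general (ℓ₀ : ℕ)
    (h : ∀ N : ℕ, ∃ m ∈ totVl ℓ₀, N ≤ totA m) :
    ∀ n : ℕ, ∀ N : ℕ, ∃ m ∈ totVl (ℓ₀ + n), N ≤ totA m := by
  intro n
  induction n with
  | zero => exact h
  | succ k ih => exact exists_mem_totVl_succ_le_totA ih

/-- If the multiplicities of totients in `𝒱^{ℓ₀}` are unbounded for some
positive integer `ℓ₀`, then for every `n ≥ 0` the multiplicities in `𝒱^{ℓ₀+n}` are unbounded. -/
theorem stmt_7 (ℓ₀ : ℕ) (hℓ₀ : 0 < ℓ₀)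
    (h : ∀ N : ℕ, ∃ m ∈ totVl ℓ₀, N ≤ totA m) :
    ∀ n : ℕ, ∀ N : ℕ, ∃ m ∈ totVl (ℓ₀ + n), N ≤ totA m :=
  stmt_7_general ℓ₀ h
end

section
/- For every positive integer k, the family of linear forms f_i(n) := 1 + 2·3^i·5^{k+1-i}·(2n+1), i = 1,…,k, is admissible: for every prime p there exists an integer n ≥ 0 such that p does not divide the product f_1(n)·f_2(n)···f_k(n). -/
open Filter Topology
open scoped Classical

/-- The family of linear forms `f_i(n) = 1 + 2·3^i·5^{k+1-i}·(2n+1)`,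
`i = 1, …, k`, is admissible: for every prime `p` there is `n ≥ 0` with
`p ∤ f_1(n)···f_k(n)`. -/
theorem stmt_9 (k : ℕ) (hk : 0 < k) (p : ℕ) (hp : p.Prime) :
    ∃ n : ℕ, ¬ p ∣ ∏ i ∈ Finset.Icc 1 k, (1 + 2 * 3 ^ i * 5 ^ (k + 1 - i) * (2 * n + 1)) := by
  haveI : Fact p.Prime := ⟨hp⟩
  refine ⟨p / 2, fun h => ?_⟩
  have h0 : ((∏ i ∈ Finset.Icc 1 k,
      (1 + 2 * 3 ^ i * 5 ^ (k + 1 - i) * (2 * (p / 2) + 1)) : ℕ) : ZMod p) = 0 :=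
    (ZMod.natCast_eq_zero_iff _ _).mpr h
  rw [Nat.cast_prod, Finset.prod_eq_one] at h0
  · exact one_ne_zero h0
  intro i hi
  rcases hp.eq_two_or_odd' with h2 | hodd
  · subst h2
    push_cast
    have h2' : (2 : ZMod 2) = 0 := rfl
    rw [h2']; ring
  · have hp2 : 2 * (p / 2) + 1 = p := by
      have := Nat.odd_iff.mp hodd; omega
    rw [hp2]
    push_cast [ZMod.natCast_self]
    ring
end

section
/- For each integer ℓ ≥ 1 there exists a constant C_ℓ > 0 such that for all sufficiently large x, V^ℓ(x) ≤ C_ℓ · (x / log x) · (log log x)^ℓ. -/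
open Filter Topology
open scoped Classical

/-!
Write `φ n = 2 ^ a * ∏ q ^ c_q * (q - 1)`, the product running over the odd primes `q ∣ n`. Every
factor `q ^ c * (q - 1)` is even, so if `φ n ≡ 2 ^ ℓ [MOD 2 ^ (ℓ + 1)]` then `n` has at most `ℓ` odd
prime factors: `φ n = 2 ^ b * v` with `v` a product of at most `ℓ` elements of
`G = {q ^ c * (q - 1) : q an odd prime}`.

By Chebyshev's bound `G` has `O(z / log z)` elements up to `z`, and by a dyadic Mertens-type
estimate `∑_{g ∈ G, g ≤ z} 1 / g = O(log log z)`. Induction on `k`, splitting off the least factor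
(which is at most `√z`), shows that there are `O(z (log log z) ^ k / log z)` products of at most `k`
elements of `G` up to `z`. Summing over `b ≤ log₂ x` gives the bound for `V^ℓ(x)`.
-/

open Real Finset

namespace TotientStrata

lemma log_le_two_mul_sqrt {x : ℝ} (hx : 0 ≤ x) : log x ≤ 2 * √x := by
  rcases hx.eq_or_lt with rfl | hx
  · simp
  have := log_le_sub_one_of_pos (sqrt_pos.2 hx)
  rw [log_sqrt hx.le] at this
  linarith

lemma log_sq_le_sixteen_mul_sqrt {x : ℝ} (hx : 1 ≤ x) : log x ^ 2 ≤ 16 * √x := by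
  have hlog : log x ≤ 4 * √√x := by
    have := log_le_two_mul_sqrt (sqrt_nonneg x)
    rw [log_sqrt (by linarith)] at this
    linarith
  calc log x ^ 2 ≤ (4 * √√x) ^ 2 := by gcongr; exact log_nonneg hx
    _ = 16 * √x := by rw [mul_pow, sq_sqrt (sqrt_nonneg x)]; norm_num

lemma one_le_log_log {x : ℝ} (hx : 16 ≤ x) : 1 ≤ log (log x) := by
  have hlog16 : log 16 = 4 * log 2 := by
    rw [show (16 : ℝ) = 2 ^ 4 by norm_num, log_pow]; norm_num
  have : exp 1 ≤ log x := by
    calc exp 1 ≤ log 16 := by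
          rw [hlog16]; linarith [exp_one_lt_d9, log_two_gt_d9]
      _ ≤ log x := log_le_log (by norm_num) hx
  rwa [le_log_iff_exp_le (by linarith [exp_pos 1])]

lemma natLog_two_add_two_le {n : ℕ} (hn : 4 ≤ n) : (Nat.log 2 n : ℝ) + 2 ≤ 3 * log n := by
  have hlog2 := log_two_gt_d9
  have hL : (Nat.log 2 n : ℝ) * log 2 ≤ log n := by
    have := natLog_le_logb n 2
    rw [logb, le_div_iff₀ (by positivity)] at this
    exact_mod_cast this
  have h4 : 2 * log 2 ≤ log n :=
    calc 2 * log 2 = log 4 := by rw [show (4 : ℝ) = 2 ^ 2 by norm_num, log_pow]; norm_num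
      _ ≤ log n := log_le_log (by norm_num) (by exact_mod_cast hn)
  nlinarith [log_nonneg (show (1 : ℝ) ≤ n by norm_cast; omega)]

lemma natLog_two_add_one_mul_sqrt_le {n : ℕ} (hn : 4 ≤ n) :
    ((Nat.log 2 n : ℝ) + 1) * Nat.sqrt n ≤ 6 * n := by
  have hlog := natLog_two_add_two_le hn
  have hlogn := log_le_two_mul_sqrt (Nat.cast_nonneg (α := ℝ) n)
  have hsqrt : (Nat.sqrt n : ℝ) ≤ √n := Real.nat_sqrt_le_real_sqrt
  calc ((Nat.log 2 n : ℝ) + 1) * Nat.sqrt n ≤ (3 * (2 * √n)) * √n := by gcongr; linarith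
    _ = 6 * n := by
        rw [show 3 * (2 * √n) * √n = 6 * (√n * √n) by ring, mul_self_sqrt (Nat.cast_nonneg _)]

lemma log_le_three_mul_log_of_sqrt_le {z w : ℕ} (hs : 3 ≤ Nat.sqrt z) (hw : Nat.sqrt z ≤ w) :
    log z ≤ 3 * log w := by
  have hcube : z ≤ w ^ 3 :=
    calc z ≤ (Nat.sqrt z + 1) ^ 2 := (Nat.lt_succ_sqrt' z).le
      _ ≤ Nat.sqrt z ^ 3 := by nlinarith
      _ ≤ w ^ 3 := Nat.pow_le_pow_left hw 3
  have hz : 0 < z := by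
    have := Nat.le_sqrt.1 hs
    omega
  calc log z ≤ log ((w : ℝ) ^ 3) := log_le_log (by positivity) (by exact_mod_cast hcube)
    _ = 3 * log w := by rw [log_pow]; norm_num

lemma eventually_forall_sqrt_le {P : ℕ → Prop} (h : ∀ᶠ w in atTop, P w) :
    ∀ᶠ z in atTop, ∀ w, Nat.sqrt z ≤ w → P w := by
  obtain ⟨Y, hY⟩ := eventually_atTop.1 h
  filter_upwards [eventually_ge_atTop (Y * Y)] with z hz w hw
  exact hY w ((Nat.le_sqrt.2 hz).trans hw)

lemma log_log_le_log_log {w z : ℝ} (hw : 16 ≤ w) (hwz : w ≤ z) : log (log w) ≤ log (log z) := by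
  have := one_le_log_log hw
  have := log_pos (by linarith : (1 : ℝ) < w)
  gcongr

lemma log_log_pow_le_of_le {w z : ℝ} (hw : 16 ≤ w) (hwz : w ≤ z) (k : ℕ) :
    log (log w) ^ k ≤ log (log z) ^ k :=
  pow_le_pow_left₀ (zero_le_one.trans (one_le_log_log hw)) (log_log_le_log_log hw hwz) k

lemma mul_log_le_of_sqrt_le {a C : ℝ} (ha : 0 ≤ a) (hC : 0 ≤ C) {k z w : ℕ}
    (hs : 16 ≤ Nat.sqrt z) (hw : Nat.sqrt z ≤ w) (hwz : w ≤ z)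
    (h : a * log w ≤ C * w * log (log w) ^ k) : a * log z ≤ 3 * C * w * log (log z) ^ k := by
  have hw16 : (16 : ℝ) ≤ w := by exact_mod_cast hs.trans hw
  have hpow := log_log_pow_le_of_le hw16 (show (w : ℝ) ≤ z by exact_mod_cast hwz) k
  have := one_le_log_log hw16
  calc a * log z ≤ a * (3 * log w) := by
        gcongr
        exact log_le_three_mul_log_of_sqrt_le (by omega) hw
    _ ≤ 3 * (C * w * log (log w) ^ k) := by linarith
    _ ≤ 3 * C * w * log (log z) ^ k := by
        rw [← mul_assoc, ← mul_assoc]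
        gcongr

lemma primeCounting_mul_log_le (n : ℕ) : (n.primeCounting : ℝ) * log n ≤ 5 * n := by
  rcases Nat.lt_or_ge 1 n with hn | hn
  · have hpi := Chebyshev.pi_le_log4_mul_div (x := n) (by exact_mod_cast hn)
    rw [Nat.floor_natCast, log_sqrt (by positivity)] at hpi
    have hlogn : 0 < log n := log_pos (by exact_mod_cast hn)
    have hlog4 : log 4 < 1.39 := by
      rw [show (4 : ℝ) = 2 ^ 2 by norm_num, log_pow]
      linarith [log_two_lt_d9]
    have hsqrt : √n * log n ≤ 2 * n := by
      have := log_le_two_mul_sqrt (Nat.cast_nonneg (α := ℝ) n)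
      nlinarith [sq_sqrt (Nat.cast_nonneg (α := ℝ) n), sqrt_nonneg (n : ℝ)]
    calc (n.primeCounting : ℝ) * log n ≤ (log 4 * n / (log n / 2) + √n) * log n := by gcongr
      _ = 2 * log 4 * n + √n * log n := by field_simp
      _ ≤ 5 * n := by nlinarith
  · interval_cases n <;> simp

lemma sum_inv_le_of_natLog_eq {s : Finset ℕ} {j : ℕ} (hs : ∀ p ∈ s, p.Prime ∧ Nat.log 2 p = j) :
    ∑ p ∈ s, (p : ℝ)⁻¹ ≤ 15 / (j + 1) := by
  have hsub : s ⊆ Nat.primesLE (2 ^ (j + 1)) := fun p hp => by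
    obtain ⟨hp, rfl⟩ := hs p hp
    exact Nat.mem_primesLE.2 ⟨(Nat.lt_pow_succ_log_self one_lt_two p).le, hp⟩
  have hterm : ∀ p ∈ s, (p : ℝ)⁻¹ ≤ ((2 : ℝ) ^ j)⁻¹ := fun p hp => by
    obtain ⟨hp, rfl⟩ := hs p hp
    gcongr
    exact_mod_cast Nat.pow_log_le_self 2 hp.ne_zero
  have hcheb : (#(Nat.primesLE (2 ^ (j + 1))) : ℝ) * ((j + 1) * log 2) ≤ 10 * 2 ^ j := by
    have := primeCounting_mul_log_le (2 ^ (j + 1))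
    rw [← Nat.primesLE_card_eq_primeCounting, Nat.cast_pow, log_pow] at this
    push_cast at this
    linarith [pow_succ (2 : ℝ) j]
  have hcard : (#s : ℝ) ≤ #(Nat.primesLE (2 ^ (j + 1))) := by exact_mod_cast card_le_card hsub
  have hlog2 := log_two_gt_d9
  have hj : (0 : ℝ) < (j + 1) * log 2 := by positivity
  calc ∑ p ∈ s, (p : ℝ)⁻¹ ≤ #s * ((2 : ℝ) ^ j)⁻¹ := by
        simpa using sum_le_sum hterm
    _ ≤ 15 / (j + 1) := by
        rw [← div_eq_mul_inv, div_le_div_iff₀ (by positivity) (by positivity)]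
        have hs0 : (0 : ℝ) ≤ #s * (j + 1) := by positivity
        nlinarith [mul_le_mul_of_nonneg_right hcard hj.le, mul_le_mul_of_nonneg_left hlog2.le hs0]

lemma sum_inv_primesBelow_two_pow_le (J : ℕ) :
    ∑ p ∈ Nat.primesBelow (2 ^ J), (p : ℝ)⁻¹ ≤ 15 * (1 + log J) := by
  have hmaps : ∀ p ∈ Nat.primesBelow (2 ^ J), Nat.log 2 p ∈ range J := fun p hp =>
    mem_range.2 <| Nat.log_lt_of_lt_pow (Nat.prime_of_mem_primesBelow hp).ne_zero
      (Nat.lt_of_mem_primesBelow hp)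
  calc ∑ p ∈ Nat.primesBelow (2 ^ J), (p : ℝ)⁻¹
      = ∑ j ∈ range J, ∑ p ∈ Nat.primesBelow (2 ^ J) with Nat.log 2 p = j, (p : ℝ)⁻¹ :=
        (sum_fiberwise_of_maps_to hmaps _).symm
    _ ≤ ∑ j ∈ range J, 15 / ((j : ℝ) + 1) := sum_le_sum fun j _ =>
        sum_inv_le_of_natLog_eq fun p hp => by
          rw [mem_filter] at hp
          exact ⟨Nat.prime_of_mem_primesBelow hp.1, hp.2⟩
    _ = 15 * harmonic J := by simp [harmonic, mul_sum, div_eq_mul_inv]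
    _ ≤ 15 * (1 + log J) := by gcongr; exact harmonic_le_one_add_log J

noncomputable def upTo (S : Set ℕ) (z : ℕ) : Finset ℕ := {n ∈ Iic z | n ∈ S}

@[simp]
lemma mem_upTo {S : Set ℕ} {z n : ℕ} : n ∈ upTo S z ↔ n ≤ z ∧ n ∈ S := by
  simp [upTo]

lemma card_upTo_mono (S : Set ℕ) : Monotone fun z => #(upTo S z) := fun _ _ h =>
  card_le_card fun n hn => by
    rw [mem_upTo] at hn ⊢
    exact ⟨hn.1.trans h, hn.2⟩

def products (S : Set ℕ) (k : ℕ) : Set ℕ :=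
  {v | ∃ s : Multiset ℕ, Multiset.card s ≤ k ∧ (∀ g ∈ s, g ∈ S) ∧ s.prod = v}

section Products

variable {S : Set ℕ}

lemma products_zero_subset : products S 0 ⊆ {1} := by
  rintro _ ⟨s, hs, -, rfl⟩
  simp [Multiset.card_eq_zero.1 (Nat.le_zero.1 hs)]

lemma products_one_subset : products S 1 ⊆ insert 1 S := by
  rintro _ ⟨s, hs, hsS, rfl⟩
  rcases Nat.le_one_iff_eq_zero_or_eq_one.1 hs with h | h
  · simp [Multiset.card_eq_zero.1 h]
  · obtain ⟨g, rfl⟩ := Multiset.card_eq_one.1 h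
    simpa using Or.inr (hsS g (Multiset.mem_singleton_self g))

lemma exists_mul_of_mem_products_succ (hS : 0 ∉ S) {k v : ℕ} (hk : 1 ≤ k)
    (hv : v ∈ products S (k + 1)) :
    v ∈ products S k ∨ ∃ g ∈ S, ∃ u ∈ products S k, g * u = v ∧ g * g ≤ v := by
  obtain ⟨s, hcard, hsS, rfl⟩ := hv
  rcases hcard.lt_or_eq with hlt | heq
  · exact Or.inl ⟨s, Nat.lt_succ_iff.1 hlt, hsS, rfl⟩
  have hs0 : s ≠ 0 := by rintro rfl; simp at heq
  obtain ⟨g, hg, hmin⟩ := Multiset.exists_min_image id hs0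
  set t := s.erase g
  have htS : ∀ b ∈ t, b ∈ S := fun b hb => hsS b (Multiset.mem_of_mem_erase hb)
  have htcard : Multiset.card t = k := by
    rw [Multiset.card_erase_of_mem hg, heq]; rfl
  have hgt : g * t.prod = s.prod := Multiset.prod_erase hg
  refine Or.inr ⟨g, hsS g hg, t.prod, ⟨t, htcard.le, htS, rfl⟩, hgt, ?_⟩
  obtain ⟨b, hb⟩ := Multiset.card_pos_iff_exists_mem.1 (by omega : 0 < Multiset.card t)
  have ht0 : t.prod ≠ 0 := Multiset.prod_ne_zero fun h0 => hS (htS 0 h0)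
  calc g * g ≤ g * t.prod := Nat.mul_le_mul_left _ <|
        (hmin b (Multiset.mem_of_mem_erase hb)).trans
          (Nat.le_of_dvd (Nat.pos_of_ne_zero ht0) (Multiset.dvd_prod hb))
    _ = s.prod := hgt

lemma card_upTo_products_succ_le (hS : 0 ∉ S) {k : ℕ} (hk : 1 ≤ k) (z : ℕ) :
    #(upTo (products S (k + 1)) z) ≤
      #(upTo (products S k) z) + ∑ g ∈ upTo S (Nat.sqrt z), #(upTo (products S k) (z / g)) := by
  have hcover : upTo (products S (k + 1)) z ⊆ upTo (products S k) z ∪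
      (upTo S (Nat.sqrt z)).biUnion fun g => (upTo (products S k) (z / g)).image (g * ·) := by
    intro v hv
    rw [mem_upTo] at hv
    rcases exists_mul_of_mem_products_succ hS hk hv.2 with hvk | ⟨g, hgS, u, hu, rfl, hgg⟩
    · exact mem_union_left _ (mem_upTo.2 ⟨hv.1, hvk⟩)
    have hg : 0 < g := Nat.pos_of_ne_zero fun h => hS (h ▸ hgS)
    refine mem_union_right _ (mem_biUnion.2 ⟨g, mem_upTo.2 ⟨Nat.le_sqrt.2 (hgg.trans hv.1), hgS⟩,
      mem_image.2 ⟨u, mem_upTo.2 ⟨(Nat.le_div_iff_mul_le hg).2 ?_, hu⟩, rfl⟩⟩)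
    linarith [hv.1]
  calc #(upTo (products S (k + 1)) z)
      ≤ #(upTo (products S k) z) +
          #((upTo S (Nat.sqrt z)).biUnion fun g => (upTo (products S k) (z / g)).image (g * ·)) :=
        (card_le_card hcover).trans (card_union_le _ _)
    _ ≤ _ := by
        gcongr
        exact card_biUnion_le.trans (sum_le_sum fun g _ => card_image_le)

/-- As `g ≤ √z`, the induction hypothesis applies at `z / g ≥ √z`, and the sum over `g` costs a
factor `∑ 1 / g ≪ log log z`. -/
lemma card_upTo_products_succ_mul_log_le (hS : 0 ∉ S) {D : ℝ} (hD : 0 ≤ D)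
    (hrecip : ∀ᶠ z in atTop, ∑ g ∈ upTo S z, (g : ℝ)⁻¹ ≤ D * log (log z))
    {k : ℕ} (hk : 1 ≤ k) {C : ℝ} (hC : 0 ≤ C)
    (h : ∀ᶠ z in atTop, #(upTo (products S k) z) * log z ≤ C * z * log (log z) ^ k) :
    ∀ᶠ z in atTop, #(upTo (products S (k + 1)) z) * log z ≤
      C * (1 + 3 * D) * z * log (log z) ^ (k + 1) := by
  filter_upwards [h, eventually_forall_sqrt_le h, eventually_forall_sqrt_le hrecip,
    eventually_forall_sqrt_le (eventually_ge_atTop 16)] with z hz hw hrec h16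
  set s := Nat.sqrt z
  have hs16 : 16 ≤ s := h16 s le_rfl
  have hzr : (16 : ℝ) ≤ z := by exact_mod_cast hs16.trans (Nat.sqrt_le_self z)
  have hll := one_le_log_log hzr
  set L := log (log z)
  have hterm : ∀ g ∈ upTo S s,
      #(upTo (products S k) (z / g)) * log z ≤ 3 * C * z * L ^ k * (g : ℝ)⁻¹ := by
    intro g hg
    rw [mem_upTo] at hg
    have hg0 : 0 < g := Nat.pos_of_ne_zero fun h => hS (h ▸ hg.2)
    have hsw : s ≤ z / g := ((Nat.le_div_iff_mul_le (by omega)).2 (Nat.sqrt_le z)).trans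
      (Nat.div_le_div_left hg.1 hg0)
    calc _ ≤ 3 * C * (z / g : ℕ) * L ^ k :=
          mul_log_le_of_sqrt_le (by positivity) hC hs16 hsw (Nat.div_le_self z g) (hw _ hsw)
      _ ≤ 3 * C * (z / g) * L ^ k := by
          have : 0 ≤ L ^ k := by positivity
          gcongr
          exact Nat.cast_div_le
      _ = 3 * C * z * L ^ k * (g : ℝ)⁻¹ := by ring
  have hsum : ∑ g ∈ upTo S s, (g : ℝ)⁻¹ ≤ D * L := by
    refine (hrec s le_rfl).trans (mul_le_mul_of_nonneg_left ?_ hD)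
    exact log_log_le_log_log (by exact_mod_cast hs16) (by exact_mod_cast Nat.sqrt_le_self z)
  have hcard : (#(upTo (products S (k + 1)) z) : ℝ) ≤
      #(upTo (products S k) z) + ∑ g ∈ upTo S s, (#(upTo (products S k) (z / g)) : ℝ) := by
    exact_mod_cast card_upTo_products_succ_le hS hk z
  have hCz : 0 ≤ C * z * L ^ k := by positivity
  calc (#(upTo (products S (k + 1)) z) : ℝ) * log z
      ≤ #(upTo (products S k) z) * log z +
          ∑ g ∈ upTo S s, (#(upTo (products S k) (z / g)) : ℝ) * log z := by
        rw [← sum_mul, ← add_mul]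
        gcongr
    _ ≤ C * z * L ^ k + ∑ g ∈ upTo S s, 3 * C * z * L ^ k * (g : ℝ)⁻¹ :=
        add_le_add hz (sum_le_sum hterm)
    _ ≤ C * z * L ^ k * L + 3 * (C * z * L ^ k) * (D * L) := by
        rw [← mul_sum, mul_assoc (3 * C * z)]
        have := mul_le_mul_of_nonneg_left hsum (by positivity : 0 ≤ 3 * C * z * L ^ k)
        nlinarith [le_mul_of_one_le_right hCz hll]
    _ = C * (1 + 3 * D) * z * L ^ (k + 1) := by ring

lemma card_upTo_products_zero_le (z : ℕ) : #(upTo (products S 0) z) ≤ 1 :=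
  card_le_one.2 fun a ha b hb => by
    rw [mem_upTo] at ha hb
    rw [products_zero_subset ha.2, products_zero_subset hb.2]

lemma card_upTo_products_one_le (z : ℕ) : #(upTo (products S 1) z) ≤ #(upTo S z) + 1 := by
  refine (card_le_card fun v hv => ?_).trans (card_insert_le 1 (upTo S z))
  rw [mem_upTo] at hv
  rcases products_one_subset hv.2 with rfl | hvS
  · exact mem_insert_self _ _
  · exact mem_insert_of_mem (mem_upTo.2 ⟨hv.1, hvS⟩)

theorem exists_card_upTo_products_mul_log_le (hS : 0 ∉ S) {A D : ℝ} (hA : 0 ≤ A) (hD : 0 ≤ D)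
    (hcount : ∀ᶠ z in atTop, #(upTo S z) * log z ≤ A * z)
    (hrecip : ∀ᶠ z in atTop, ∑ g ∈ upTo S z, (g : ℝ)⁻¹ ≤ D * log (log z)) :
    ∀ k, ∃ C, 0 < C ∧
      ∀ᶠ z in atTop, #(upTo (products S k) z) * log z ≤ C * z * log (log z) ^ k
  | 0 => ⟨1, one_pos, Eventually.of_forall fun z => by
      have hcard : (#(upTo (products S 0) z) : ℝ) ≤ 1 := by
        exact_mod_cast card_upTo_products_zero_le z
      have := log_le_self (Nat.cast_nonneg (α := ℝ) z)
      have := log_natCast_nonneg z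
      simp only [pow_zero, one_mul, mul_one]
      nlinarith⟩
  | 1 => ⟨A + 1, by positivity, by
      filter_upwards [hcount, eventually_ge_atTop 16] with z hz h16
      have hcard : (#(upTo (products S 1) z) : ℝ) ≤ #(upTo S z) + 1 := by
        exact_mod_cast card_upTo_products_one_le z
      have := log_le_self (Nat.cast_nonneg (α := ℝ) z)
      have := log_natCast_nonneg z
      have := one_le_log_log (by exact_mod_cast h16 : (16 : ℝ) ≤ z)
      have hAz : 0 ≤ (A + 1) * z := by positivity
      rw [pow_one]
      nlinarith [le_mul_of_one_le_right hAz this]⟩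
  | k + 2 =>
    have ⟨C, hC, h⟩ := exists_card_upTo_products_mul_log_le hS hA hD hcount hrecip (k + 1)
    ⟨C * (1 + 3 * D), by positivity,
      card_upTo_products_succ_mul_log_le hS hD hrecip (by omega) hC.le h⟩

end Products

def oddPrimePowerTotients : Set ℕ := {g | ∃ q c : ℕ, q.Prime ∧ q ≠ 2 ∧ q ^ c * (q - 1) = g}

lemma three_le_of_prime_of_ne_two {q : ℕ} (hq : q.Prime) (hq2 : q ≠ 2) : 3 ≤ q := by
  have := hq.two_le; omega

lemma pow_mul_pred_pos {q : ℕ} (hq : 3 ≤ q) (c : ℕ) : 0 < q ^ c * (q - 1) :=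
  Nat.mul_pos (by positivity) (by omega)

lemma zero_notMem_oddPrimePowerTotients : 0 ∉ oddPrimePowerTotients := by
  rintro ⟨q, c, hq, hq2, h⟩
  exact (pow_mul_pred_pos (three_le_of_prime_of_ne_two hq hq2) c).ne' h

lemma card_upTo_oddPrimePowerTotients_le (z : ℕ) :
    #(upTo oddPrimePowerTotients z) ≤
      (z + 1).primeCounting + (Nat.sqrt z + 2) * (Nat.log 2 z + 1) := by
  have hcover : upTo oddPrimePowerTotients z ⊆ (Nat.primesLE (z + 1)).image (· - 1) ∪
      (range (Nat.sqrt z + 2) ×ˢ range (Nat.log 2 z + 1)).image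
        fun qc => qc.1 ^ qc.2 * (qc.1 - 1) := by
    intro g hg
    obtain ⟨hgz, q, c, hq, hq2, rfl⟩ := mem_upTo.1 hg
    have hq3 := three_le_of_prime_of_ne_two hq hq2
    rcases c.eq_zero_or_pos with rfl | hc
    · refine mem_union_left _ (mem_image.2 ⟨q, Nat.mem_primesLE.2 ⟨?_, hq⟩, by simp⟩)
      simp at hgz; omega
    refine mem_union_right _
      (mem_image.2 ⟨(q, c), mem_product.2 ⟨mem_range.2 ?_, mem_range.2 ?_⟩, rfl⟩)
    · have : (q - 1) * (q - 1) ≤ z :=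
        calc (q - 1) * (q - 1) ≤ q ^ c * (q - 1) :=
              Nat.mul_le_mul_right _ ((Nat.sub_le q 1).trans (Nat.le_self_pow hc.ne' q))
          _ ≤ z := hgz
      have := Nat.le_sqrt.2 this
      omega
    · refine Nat.lt_succ_of_le (Nat.le_log_of_pow_le one_lt_two ?_)
      calc 2 ^ c ≤ q ^ c := Nat.pow_le_pow_left (by omega) c
        _ ≤ q ^ c * (q - 1) := Nat.le_mul_of_pos_right _ (by omega)
        _ ≤ z := hgz
  calc #(upTo oddPrimePowerTotients z)
      ≤ #(Nat.primesLE (z + 1)) + #(range (Nat.sqrt z + 2) ×ˢ range (Nat.log 2 z + 1)) :=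
        (card_le_card hcover).trans <|
          (card_union_le _ _).trans (add_le_add card_image_le card_image_le)
    _ = _ := by rw [Nat.primesLE_card_eq_primeCounting, card_product, card_range, card_range]

lemma card_upTo_oddPrimePowerTotients_mul_log_le {z : ℕ} (hz : 16 ≤ z) :
    #(upTo oddPrimePowerTotients z) * log z ≤ 102 * z := by
  have hzr : (16 : ℝ) ≤ z := by exact_mod_cast hz
  have hlog : 0 ≤ log z := log_nonneg (by linarith)
  have hcard : (#(upTo oddPrimePowerTotients z) : ℝ) ≤
      (z + 1).primeCounting + (Nat.sqrt z + 2) * (Nat.log 2 z + 1) := by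
    exact_mod_cast card_upTo_oddPrimePowerTotients_le z
  have hpi : ((z + 1).primeCounting : ℝ) * log z ≤ 6 * z := by
    have := primeCounting_mul_log_le (z + 1)
    push_cast at this
    have : log z ≤ log (z + 1) := log_le_log (by linarith) (by linarith)
    nlinarith [Nat.cast_nonneg (α := ℝ) (z + 1).primeCounting]
  have hsqrt : (Nat.sqrt z : ℝ) + 2 ≤ 2 * √z := by
    have : (4 : ℝ) ≤ √z := by
      rw [show (4 : ℝ) = √16 by rw [show (16 : ℝ) = 4 ^ 2 by norm_num, sqrt_sq (by norm_num)]]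
      exact sqrt_le_sqrt hzr
    linarith [Real.nat_sqrt_le_real_sqrt (a := z)]
  have hL : (Nat.log 2 z : ℝ) + 1 ≤ 3 * log z := by
    linarith [natLog_two_add_two_le (by omega : 4 ≤ z)]
  have hsq := log_sq_le_sixteen_mul_sqrt (by linarith : (1 : ℝ) ≤ z)
  have hrest : ((Nat.sqrt z : ℝ) + 2) * (Nat.log 2 z + 1) * log z ≤ 96 * z :=
    calc ((Nat.sqrt z : ℝ) + 2) * (Nat.log 2 z + 1) * log z ≤ 2 * √z * (3 * log z) * log z := by
          gcongr
      _ = 6 * √z * log z ^ 2 := by ring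
      _ ≤ 6 * √z * (16 * √z) := by gcongr
      _ = 96 * z := by nlinarith [mul_self_sqrt (Nat.cast_nonneg (α := ℝ) z)]
  nlinarith

lemma sum_inv_pow_mul_pred_le {q : ℕ} (hq : 3 ≤ q) (n : ℕ) :
    ∑ c ∈ range n, ((q ^ c * (q - 1) : ℕ) : ℝ)⁻¹ ≤ 3 / q := by
  have hq' : (3 : ℝ) ≤ q := by exact_mod_cast hq
  have hgeom : ∑ c ∈ range n, ((q : ℝ)⁻¹) ^ c ≤ 3 / 2 := by
    rw [range_eq_Ico]
    refine (geom_sum_Ico_le_of_lt_one (by positivity)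
      (inv_lt_one_of_one_lt₀ (by linarith))).trans ?_
    have : (q : ℝ)⁻¹ ≤ 3⁻¹ := inv_anti₀ (by norm_num) hq'
    rw [pow_zero, div_le_div_iff₀ (by linarith) (by norm_num)]
    linarith
  calc ∑ c ∈ range n, ((q ^ c * (q - 1) : ℕ) : ℝ)⁻¹
      = ((q : ℝ) - 1)⁻¹ * ∑ c ∈ range n, ((q : ℝ)⁻¹) ^ c := by
        rw [mul_sum]
        refine sum_congr rfl fun c _ => ?_
        rw [Nat.cast_mul, Nat.cast_sub (by omega), Nat.cast_pow, mul_inv, inv_pow, Nat.cast_one,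
          mul_comm]
    _ ≤ ((q : ℝ) - 1)⁻¹ * (3 / 2) := by
        have : 0 < (q : ℝ) - 1 := by linarith
        gcongr
    _ ≤ 3 / q := by
        rw [inv_mul_eq_div, div_div, div_le_div_iff₀ (by nlinarith) (by linarith)]
        linarith

lemma sum_inv_upTo_oddPrimePowerTotients_le_three_mul (z : ℕ) :
    ∑ g ∈ upTo oddPrimePowerTotients z, (g : ℝ)⁻¹ ≤
      3 * ∑ p ∈ Nat.primesBelow (2 ^ (Nat.log 2 z + 2)), (p : ℝ)⁻¹ := by
  set P := (Nat.primesBelow (2 ^ (Nat.log 2 z + 2))).erase 2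
  have hsub : upTo oddPrimePowerTotients z ⊆
      (P ×ˢ range (z + 1)).image fun qc => qc.1 ^ qc.2 * (qc.1 - 1) := by
    intro g hg
    obtain ⟨hgz, q, c, hq, hq2, rfl⟩ := mem_upTo.1 hg
    have hq3 := three_le_of_prime_of_ne_two hq hq2
    refine mem_image.2 ⟨(q, c), mem_product.2 ⟨mem_erase.2 ⟨hq2, Nat.mem_primesBelow.2 ⟨?_, hq⟩⟩,
      mem_range.2 ?_⟩, rfl⟩
    · have := Nat.lt_pow_succ_log_self one_lt_two z
      have := Nat.le_mul_of_pos_left (q - 1) (pow_pos (by omega : 0 < q) c)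
      have : 2 ^ (Nat.log 2 z + 1) < 2 ^ (Nat.log 2 z + 2) :=
        Nat.pow_lt_pow_right one_lt_two (by omega)
      omega
    · have := Nat.lt_two_pow_self (n := c)
      have := Nat.pow_le_pow_left (by omega : 2 ≤ q) c
      have := Nat.le_mul_of_pos_right (q ^ c) (by omega : 0 < q - 1)
      omega
  calc ∑ g ∈ upTo oddPrimePowerTotients z, (g : ℝ)⁻¹
      ≤ ∑ qc ∈ P ×ˢ range (z + 1), ((qc.1 ^ qc.2 * (qc.1 - 1) : ℕ) : ℝ)⁻¹ :=
        (sum_le_sum_of_subset_of_nonneg hsub fun _ _ _ => by positivity).trans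
          (sum_image_le_of_nonneg fun _ _ => by positivity)
    _ = ∑ q ∈ P, ∑ c ∈ range (z + 1), ((q ^ c * (q - 1) : ℕ) : ℝ)⁻¹ := sum_product _ _ _
    _ ≤ ∑ q ∈ P, 3 * (q : ℝ)⁻¹ := sum_le_sum fun q hq => by
        obtain ⟨hq2, hq⟩ := mem_erase.1 hq
        rw [← div_eq_mul_inv]
        exact sum_inv_pow_mul_pred_le
          (three_le_of_prime_of_ne_two (Nat.prime_of_mem_primesBelow hq) hq2) _
    _ ≤ 3 * ∑ p ∈ Nat.primesBelow (2 ^ (Nat.log 2 z + 2)), (p : ℝ)⁻¹ := by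
        rw [mul_sum]
        exact sum_le_sum_of_subset_of_nonneg (erase_subset _ _) fun _ _ _ => by positivity

lemma sum_inv_upTo_oddPrimePowerTotients_le {z : ℕ} (hz : 16 ≤ z) :
    ∑ g ∈ upTo oddPrimePowerTotients z, (g : ℝ)⁻¹ ≤ 180 * log (log z) := by
  have hzr : (16 : ℝ) ≤ z := by exact_mod_cast hz
  have hll := one_le_log_log hzr
  have hlog : log (Nat.log 2 z + 2 : ℕ) ≤ 2 + log (log z) := by
    have hlog0 : 0 < log z := log_pos (by linarith)
    calc log (Nat.log 2 z + 2 : ℕ) ≤ log (3 * log z) := by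
          push_cast
          exact log_le_log (by positivity) (natLog_two_add_two_le (by omega))
      _ = log 3 + log (log z) := log_mul (by norm_num) hlog0.ne'
      _ ≤ 2 + log (log z) := by linarith [log_le_sub_one_of_pos (by norm_num : (0 : ℝ) < 3)]
  calc ∑ g ∈ upTo oddPrimePowerTotients z, (g : ℝ)⁻¹
      ≤ 3 * ∑ p ∈ Nat.primesBelow (2 ^ (Nat.log 2 z + 2)), (p : ℝ)⁻¹ :=
        sum_inv_upTo_oddPrimePowerTotients_le_three_mul z
    _ ≤ 3 * (15 * (1 + log (Nat.log 2 z + 2 : ℕ))) := by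
        gcongr; exact sum_inv_primesBelow_two_pow_le _
    _ ≤ 180 * log (log z) := by linarith

lemma two_dvd_of_mem_oddPrimePowerTotients {g : ℕ} (hg : g ∈ oddPrimePowerTotients) : 2 ∣ g := by
  obtain ⟨q, c, hq, hq2, rfl⟩ := hg
  exact Dvd.dvd.mul_left (hq.even_sub_one hq2).two_dvd _

lemma totient_eq_two_pow_mul_prod_erase_two {n : ℕ} (hn : n ≠ 0) :
    n.totient = 2 ^ (n.factorization 2 - 1) *
      ∏ p ∈ n.primeFactors.erase 2, p ^ (n.factorization p - 1) * (p - 1) := by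
  rw [Nat.totient_eq_prod_factorization hn, Finsupp.prod, Nat.support_factorization]
  by_cases h2 : 2 ∈ n.primeFactors
  · rw [← mul_prod_erase _ _ h2]
    norm_num
  · rw [erase_eq_of_notMem h2, Finsupp.notMem_support_iff.1 (n.support_factorization ▸ h2)]
    simp

lemma exists_eq_two_pow_mul_of_mem_totVl {ℓ m : ℕ} (hm : m ∈ totVl ℓ) :
    ∃ b, ∃ v ∈ products oddPrimePowerTotients ℓ, m = 2 ^ b * v := by
  obtain ⟨⟨n, hn, rfl⟩, hmod⟩ := hm
  set O := n.primeFactors.erase 2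
  set f := fun p => p ^ (n.factorization p - 1) * (p - 1)
  have hfO : ∀ p ∈ O, f p ∈ oddPrimePowerTotients := fun p hp => by
    obtain ⟨hp2, hp⟩ := mem_erase.1 hp
    exact ⟨p, _, Nat.prime_of_mem_primeFactors hp, hp2, rfl⟩
  have hcard : #O ≤ ℓ := by
    by_contra! hlt
    have hdvd : 2 ^ (ℓ + 1) ∣ n.totient := by
      rw [totient_eq_two_pow_mul_prod_erase_two hn.ne']
      refine Dvd.dvd.mul_left ((pow_dvd_pow 2 hlt).trans ?_) _
      simpa using prod_dvd_prod_of_dvd (s := O) (fun _ => 2) f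
        fun p hp => two_dvd_of_mem_oddPrimePowerTotients (hfO p hp)
    have : 0 < 2 ^ ℓ := by positivity
    omega
  refine ⟨n.factorization 2 - 1, ∏ p ∈ O, f p,
    ⟨O.val.map f, by simpa using hcard, fun g hg => ?_, (prod_eq_multiset_prod O f).symm⟩,
    totient_eq_two_pow_mul_prod_erase_two hn.ne'⟩
  obtain ⟨p, hp, rfl⟩ := Multiset.mem_map.1 hg
  exact hfO p hp

lemma card_upTo_totVl_le (ℓ X : ℕ) :
    #(upTo (totVl ℓ) X) ≤
      ∑ b ∈ range (Nat.log 2 X + 1), #(upTo (products oddPrimePowerTotients ℓ) (X / 2 ^ b)) := by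
  have hcover : upTo (totVl ℓ) X ⊆ (range (Nat.log 2 X + 1)).biUnion fun b =>
      (upTo (products oddPrimePowerTotients ℓ) (X / 2 ^ b)).image (2 ^ b * ·) := by
    intro m hm
    obtain ⟨hmX, hm⟩ := mem_upTo.1 hm
    obtain ⟨b, v, hv, rfl⟩ := exists_eq_two_pow_mul_of_mem_totVl hm
    have hv0 : v ≠ 0 := by
      rintro rfl
      exact (pow_pos two_pos ℓ).ne (by simpa using hm.2)
    have h2b : 2 ^ b ≤ X := (Nat.le_mul_of_pos_right _ (Nat.pos_of_ne_zero hv0)).trans hmX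
    refine mem_biUnion.2 ⟨b, mem_range.2 (Nat.lt_succ_of_le (Nat.le_log_of_pow_le one_lt_two h2b)),
      mem_image.2 ⟨v, mem_upTo.2 ⟨(Nat.le_div_iff_mul_le (by positivity)).2 ?_, hv⟩, rfl⟩⟩
    linarith
  exact (card_le_card hcover).trans (card_biUnion_le.trans (sum_le_sum fun b _ => card_image_le))

/-- Where `X / 2 ^ b < √X`, monotonicity bounds the term by `f (√X)`. -/
lemma sum_div_two_pow_mul_log_le {f : ℕ → ℕ} (hf : Monotone f) {C : ℝ} (hC : 0 ≤ C) {k : ℕ}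
    (h : ∀ᶠ w in atTop, f w * log w ≤ C * w * log (log w) ^ k) :
    ∀ᶠ X in atTop, (∑ b ∈ range (Nat.log 2 X + 1), (f (X / 2 ^ b) : ℝ)) * log X ≤
      24 * C * X * log (log X) ^ k := by
  filter_upwards [eventually_forall_sqrt_le h, eventually_forall_sqrt_le (eventually_ge_atTop 16)]
    with X hw h16
  set s := Nat.sqrt X
  have hs16 : 16 ≤ s := h16 s le_rfl
  have hXr : (16 : ℝ) ≤ X := by exact_mod_cast hs16.trans (Nat.sqrt_le_self X)
  set L := log (log X)
  have hCL : 0 ≤ 3 * C * L ^ k := by have := one_le_log_log hXr; positivity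
  have hterm : ∀ b ∈ range (Nat.log 2 X + 1),
      (f (X / 2 ^ b) : ℝ) * log X ≤ 3 * C * L ^ k * (X * 2⁻¹ ^ b + s) := by
    intro b _
    set w := max (X / 2 ^ b) s
    have hsw : s ≤ w := le_max_right _ _
    have hwle : (w : ℝ) ≤ X * 2⁻¹ ^ b + s := by
      have : ((X / 2 ^ b : ℕ) : ℝ) ≤ X * 2⁻¹ ^ b := by
        rw [inv_pow, ← div_eq_mul_inv]; exact_mod_cast Nat.cast_div_le
      have : (w : ℝ) ≤ (X / 2 ^ b : ℕ) + s := by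
        exact_mod_cast max_le_add_of_nonneg (Nat.zero_le _) (Nat.zero_le _)
      linarith
    have hfw : (f (X / 2 ^ b) : ℝ) ≤ f w := by exact_mod_cast hf (le_max_left _ _)
    calc (f (X / 2 ^ b) : ℝ) * log X ≤ f w * log X := by gcongr
      _ ≤ 3 * C * w * L ^ k := mul_log_le_of_sqrt_le (by positivity) hC hs16 hsw
          (max_le (Nat.div_le_self X _) (Nat.sqrt_le_self X)) (hw w hsw)
      _ ≤ 3 * C * L ^ k * (X * 2⁻¹ ^ b + s) := by rw [mul_right_comm]; gcongr
  have hgeom : ∑ b ∈ range (Nat.log 2 X + 1), (2⁻¹ : ℝ) ^ b ≤ 2 := by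
    rw [range_eq_Ico]
    refine (geom_sum_Ico_le_of_lt_one (by norm_num) (by norm_num)).trans ?_
    norm_num
  have hLs := natLog_two_add_one_mul_sqrt_le (by have := Nat.sqrt_le_self X; omega : 4 ≤ X)
  calc (∑ b ∈ range (Nat.log 2 X + 1), (f (X / 2 ^ b) : ℝ)) * log X
      ≤ ∑ b ∈ range (Nat.log 2 X + 1), 3 * C * L ^ k * (X * 2⁻¹ ^ b + s) := by
        rw [sum_mul]; exact sum_le_sum hterm
    _ = 3 * C * L ^ k * (X * ∑ b ∈ range (Nat.log 2 X + 1), (2⁻¹ : ℝ) ^ b +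
          (Nat.log 2 X + 1) * s) := by
        rw [← mul_sum, sum_add_distrib, ← mul_sum, sum_const, card_range, nsmul_eq_mul]
        push_cast; ring
    _ ≤ 3 * C * L ^ k * (X * 2 + 6 * X) := by gcongr
    _ = 24 * C * X * L ^ k := by ring

lemma countUpTo_eq_card_upTo (U : Set ℕ) {x : ℝ} (hx : 0 ≤ x) :
    countUpTo U x = #(upTo U ⌊x⌋₊) := by
  rw [countUpTo, ← Set.ncard_coe_finset]
  congr 1
  ext n
  simp [Nat.le_floor_iff hx, and_comm]

lemma eventually_le_div_log_of_nat {a : ℕ → ℕ} {C : ℝ} (hC : 0 ≤ C) {k : ℕ}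
    (h : ∀ᶠ X in atTop, a X * log X ≤ C * X * log (log X) ^ k) :
    ∀ᶠ x : ℝ in atTop, (a ⌊x⌋₊ : ℝ) ≤ 2 * C * (x / log x) * log (log x) ^ k := by
  filter_upwards [tendsto_nat_floor_atTop.eventually h,
    tendsto_nat_floor_atTop.eventually (eventually_ge_atTop 16), eventually_ge_atTop 0]
    with x hX h16 hx
  set X := ⌊x⌋₊
  have hXr : (16 : ℝ) ≤ X := by exact_mod_cast h16
  have hXx : (X : ℝ) ≤ x := Nat.floor_le hx
  have hlogx : 0 < log x := log_pos (by linarith)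
  have hlog2 : log x ≤ 2 * log X := by
    have : x ≤ (X : ℝ) ^ 2 := by nlinarith [Nat.lt_floor_add_one x]
    calc log x ≤ log ((X : ℝ) ^ 2) := log_le_log (by linarith) this
      _ = 2 * log X := by rw [log_pow]; norm_num
  have hpow := log_log_pow_le_of_le hXr hXx k
  have hpow0 : 0 ≤ log (log X) ^ k := pow_nonneg (by linarith [one_le_log_log hXr]) k
  rw [show 2 * C * (x / log x) * log (log x) ^ k = 2 * C * x * log (log x) ^ k / log x by ring,
    le_div_iff₀ hlogx]
  calc (a X : ℝ) * log x ≤ 2 * (a X * log X) := by nlinarith [Nat.cast_nonneg (α := ℝ) (a X)]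
    _ ≤ 2 * (C * X * log (log X) ^ k) := by gcongr
    _ ≤ 2 * C * x * log (log x) ^ k := by
        rw [mul_assoc 2, mul_assoc 2, mul_assoc C, mul_assoc C]
        gcongr

end TotientStrata

open TotientStrata in
theorem stmt_11_general (ℓ : ℕ) :
    ∃ C : ℝ, 0 < C ∧ ∀ᶠ x : ℝ in atTop,
      (countUpTo (totVl ℓ) x : ℝ) ≤ C * (x / Real.log x) * (Real.log (Real.log x)) ^ ℓ := by
  obtain ⟨C, hC, hproducts⟩ := exists_card_upTo_products_mul_log_le
    zero_notMem_oddPrimePowerTotients (by norm_num : (0 : ℝ) ≤ 102) (by norm_num : (0 : ℝ) ≤ 180)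
    (eventually_atTop.2 ⟨16, fun _ => card_upTo_oddPrimePowerTotients_mul_log_le⟩)
    (eventually_atTop.2 ⟨16, fun _ => sum_inv_upTo_oddPrimePowerTotients_le⟩) ℓ
  have htotVl : ∀ᶠ X in atTop, #(upTo (totVl ℓ) X) * log X ≤ 24 * C * X * log (log X) ^ ℓ :=
    (sum_div_two_pow_mul_log_le (card_upTo_mono _) hC.le hproducts).mono fun X hX =>
      (mul_le_mul_of_nonneg_right (by exact_mod_cast card_upTo_totVl_le ℓ X)
        (log_natCast_nonneg X)).trans hX
  refine ⟨2 * (24 * C), by positivity, ?_⟩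
  filter_upwards [eventually_le_div_log_of_nat (by positivity) htotVl, eventually_ge_atTop 0]
    with x hx hx0
  rwa [countUpTo_eq_card_upTo _ hx0]

/-- For each `ℓ ≥ 1` there is `C_ℓ > 0` with
`V^ℓ(x) ≤ C_ℓ·(x/log x)·(log log x)^ℓ` for all sufficiently large `x`. -/
theorem stmt_11 (ℓ : ℕ) (hℓ : 1 ≤ ℓ) :
    ∃ C : ℝ, 0 < C ∧ ∀ᶠ x : ℝ in atTop,
      (countUpTo (totVl ℓ) x : ℝ) ≤ C * (x / Real.log x) * (Real.log (Real.log x)) ^ ℓ :=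
  stmt_11_general ℓ
end

section
/- For x > 1, among the n with φ(n) ≤ x and φ(n) ∈ 𝒱^ℓ, the number of odd such n is at most the number of even such n; moreover, for every even n with φ(n) ∈ 𝒱^ℓ one has φ(2n) = 2φ(n) ∈ 𝒱^{ℓ+1}, and hence S^{ℓ+1}(2x) ≥ S^ℓ(x)/2. -/
/-! The map `n ↦ 2n` sends odd `n` to even `2n` with the same totient, so it injects the odd
solutions of `φ(n) ∈ 𝒱^ℓ, φ(n) ≤ x` into the even ones. On even `n` it doubles the totient, which
moves `φ(n)` from `𝒱^ℓ` to `𝒱^{ℓ+1}`; so it injects the even solutions for `(ℓ, x)` into all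
solutions for `(ℓ + 1, 2x)`. Since `S^ℓ(x)` counts all solutions for `(ℓ, x)`, i.e. odd plus even
ones, it is at most twice the number of even ones, hence at most `2 S^{ℓ+1}(2x)`. -/

open Filter Topology
open scoped Classical

open Finset

namespace Nat

theorem le_totient_add_one_of_mem_primeFactors {n p : ℕ} (hn : 0 < n) (hp : p ∈ n.primeFactors) :
    p ≤ φ n + 1 := by
  have hprime := prime_of_mem_primeFactors hp
  have hdvd : p - 1 ∣ φ n := by
    simpa [totient_prime hprime] using totient_dvd_of_dvd (dvd_of_mem_primeFactors hp)
  have := le_of_dvd (totient_pos.mpr hn) hdvd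
  omega

theorem le_totient_mul_succ_pow {n : ℕ} (hn : 0 < n) : n ≤ φ n * (φ n + 1) ^ (φ n + 2) := by
  have hle := fun p (hp : p ∈ n.primeFactors) => le_totient_add_one_of_mem_primeFactors hn hp
  have hcard : n.primeFactors.card ≤ φ n + 2 := by
    simpa using card_le_card fun p hp => mem_range.mpr (Nat.lt_succ_of_le (hle p hp))
  calc n ≤ n * ∏ p ∈ n.primeFactors, (p - 1) :=
        Nat.le_mul_of_pos_right n (prod_pos fun p hp => Nat.sub_pos_of_lt
          (prime_of_mem_primeFactors hp).one_lt)
    _ = φ n * ∏ p ∈ n.primeFactors, p := (totient_mul_prod_primeFactors n).symm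
    _ ≤ φ n * (φ n + 1) ^ n.primeFactors.card := by gcongr; exact prod_le_pow_card _ _ _ hle
    _ ≤ φ n * (φ n + 1) ^ (φ n + 2) := by gcongr; omega

theorem finite_setOf_totient_le (M : ℕ) : {n : ℕ | 0 < n ∧ φ n ≤ M}.Finite :=
  (Set.finite_Iic (M * (M + 1) ^ (M + 2))).subset fun n ⟨hn, hM⟩ =>
    (le_totient_mul_succ_pow hn).trans (by gcongr; omega)

end Nat

theorem ne_zero_of_mem_totVl {ℓ m : ℕ} (hm : m ∈ totVl ℓ) : m ≠ 0 := by
  rintro rfl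
  simpa using hm.2.symm

theorem two_mul_totient_mem_totVl_succ {ℓ n : ℕ} (hn : Even n) (hv : n.totient ∈ totVl ℓ) :
    2 * n.totient ∈ totVl (ℓ + 1) := by
  have hpos : 0 < n := Nat.pos_of_ne_zero fun h => ne_zero_of_mem_totVl (h ▸ hv) rfl
  refine ⟨⟨2 * n, by omega, Nat.totient_two_mul_of_even hn⟩, ?_⟩
  rw [pow_succ' 2 (ℓ + 1), Nat.mul_mod_mul_left, hv.2, ← pow_succ']

/-- `φ⁻¹(𝒱^ℓ ∩ [0, x])`, whose size is `S^ℓ(x)`. -/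
def totPre (ℓ : ℕ) (x : ℝ) : Set ℕ := {n : ℕ | 0 < n ∧ (n.totient : ℝ) ≤ x ∧ n.totient ∈ totVl ℓ}

theorem finite_totPre (ℓ : ℕ) (x : ℝ) : (totPre ℓ x).Finite :=
  (Nat.finite_setOf_totient_le ⌊x⌋₊).subset fun _ ⟨hn, hx, _⟩ => ⟨hn, Nat.le_floor hx⟩

theorem finite_setOf_and_totPre (ℓ : ℕ) (x : ℝ) (P : ℕ → Prop) :
    {n : ℕ | 0 < n ∧ P n ∧ (n.totient : ℝ) ≤ x ∧ n.totient ∈ totVl ℓ}.Finite :=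
  (finite_totPre ℓ x).subset fun _ ⟨hn, _, hx, hv⟩ => ⟨hn, hx, hv⟩

theorem totS_eq_ncard_totPre (ℓ : ℕ) (x : ℝ) : totS ℓ x = (totPre ℓ x).ncard := by
  rw [Set.ncard_eq_toFinset_card _ (finite_totPre ℓ x),
    card_eq_sum_card_fiberwise (f := Nat.totient)
      (t := (range (⌊x⌋₊ + 1)).filter (· ∈ totVl ℓ)) ?maps_to, totS, sum_filter]
  case maps_to =>
    intro n hn
    simp only [Set.Finite.coe_toFinset, totPre] at hn
    simpa [Nat.lt_succ_iff] using ⟨Nat.le_floor hn.2.1, hn.2.2⟩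
  refine sum_congr rfl fun m hm => ?_
  split_ifs with hv
  · rw [totA, ← Set.ncard_coe_finset]
    congr 1
    ext n
    have hmx : (m : ℝ) ≤ x :=
      (Nat.le_floor_iff' (ne_zero_of_mem_totVl hv)).mp (Nat.lt_succ_iff.mp (mem_range.mp hm))
    simp only [coe_filter, Set.Finite.mem_toFinset, totPre, Set.mem_ofPred_eq]
    constructor
    · rintro ⟨hn, rfl⟩
      exact ⟨⟨hn, hmx, hv⟩, rfl⟩
    · rintro ⟨⟨hn, -⟩, rfl⟩
      exact ⟨hn, rfl⟩
  · rfl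

theorem ncard_totPre_eq_odd_add_even (ℓ : ℕ) (x : ℝ) :
    (totPre ℓ x).ncard =
      Set.ncard {n : ℕ | 0 < n ∧ Odd n ∧ (n.totient : ℝ) ≤ x ∧ n.totient ∈ totVl ℓ} +
      Set.ncard {n : ℕ | 0 < n ∧ Even n ∧ (n.totient : ℝ) ≤ x ∧ n.totient ∈ totVl ℓ} := by
  rw [← Set.ncard_union_eq ?disjoint (finite_setOf_and_totPre ℓ x Odd)
    (finite_setOf_and_totPre ℓ x Even)]
  case disjoint =>
    exact Set.disjoint_left.mpr fun n ⟨_, hodd, _⟩ ⟨_, heven, _⟩ =>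
      Nat.not_even_iff_odd.mpr hodd heven
  congr 1
  ext n
  rcases Nat.even_or_odd n with h | h <;>
    simp [totPre, h, Nat.not_even_iff_odd, Nat.not_odd_iff_even]

theorem ncard_odd_le_ncard_even (ℓ : ℕ) (x : ℝ) :
    Set.ncard {n : ℕ | 0 < n ∧ Odd n ∧ (n.totient : ℝ) ≤ x ∧ n.totient ∈ totVl ℓ} ≤
      Set.ncard {n : ℕ | 0 < n ∧ Even n ∧ (n.totient : ℝ) ≤ x ∧ n.totient ∈ totVl ℓ} := by
  refine Set.ncard_le_ncard_of_injOn (2 * ·) ?_ (fun _ _ _ _ => Nat.eq_of_mul_eq_mul_left two_pos)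
    (finite_setOf_and_totPre ℓ x Even)
  rintro n ⟨hn, hodd, hx, hv⟩
  rw [Set.mem_ofPred_eq, Nat.totient_two_mul_of_odd hodd]
  exact ⟨by omega, even_two_mul n, hx, hv⟩

theorem ncard_even_le_totS_succ (ℓ : ℕ) (x : ℝ) :
    Set.ncard {n : ℕ | 0 < n ∧ Even n ∧ (n.totient : ℝ) ≤ x ∧ n.totient ∈ totVl ℓ} ≤
      totS (ℓ + 1) (2 * x) := by
  rw [totS_eq_ncard_totPre]
  refine Set.ncard_le_ncard_of_injOn (2 * ·) ?_ (fun _ _ _ _ => Nat.eq_of_mul_eq_mul_left two_pos)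
    (finite_totPre _ _)
  rintro n ⟨hn, heven, hx, hv⟩
  rw [totPre, Set.mem_ofPred_eq, Nat.totient_two_mul_of_even heven]
  exact ⟨by omega, by push_cast; linarith, two_mul_totient_mem_totVl_succ heven hv⟩

theorem totS_le_two_mul_totS_succ (ℓ : ℕ) (x : ℝ) : totS ℓ x ≤ 2 * totS (ℓ + 1) (2 * x) := by
  have hodd := ncard_odd_le_ncard_even ℓ x
  have heven := ncard_even_le_totS_succ ℓ x
  rw [totS_eq_ncard_totPre, ncard_totPre_eq_odd_add_even]
  omega

theorem stmt_16_general (x : ℝ) (ℓ : ℕ) :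
    (Set.ncard {n : ℕ | 0 < n ∧ Odd n ∧ (n.totient : ℝ) ≤ x ∧ n.totient ∈ totVl ℓ} ≤
      Set.ncard {n : ℕ | 0 < n ∧ Even n ∧ (n.totient : ℝ) ≤ x ∧ n.totient ∈ totVl ℓ}) ∧
    (∀ n : ℕ, 0 < n → Even n → n.totient ∈ totVl ℓ →
      (2 * n).totient = 2 * n.totient ∧ 2 * n.totient ∈ totVl (ℓ + 1)) ∧
    (totS ℓ x : ℝ) / 2 ≤ (totS (ℓ + 1) (2 * x) : ℝ) := by
  refine ⟨ncard_odd_le_ncard_even ℓ x, fun n _ heven hv =>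
    ⟨Nat.totient_two_mul_of_even heven, two_mul_totient_mem_totVl_succ heven hv⟩, ?_⟩
  rw [div_le_iff₀ two_pos]
  exact_mod_cast (totS_le_two_mul_totS_succ ℓ x).trans_eq (mul_comm _ _)

/-- For `x > 1`, among `n` with `φ(n) ≤ x` and `φ(n) ∈ 𝒱^ℓ`, the odd ones are at
most as many as the even ones; every even such `n` satisfies `φ(2n) = 2φ(n) ∈ 𝒱^{ℓ+1}`; and
hence `S^{ℓ+1}(2x) ≥ S^ℓ(x)/2`. -/
theorem stmt_16 (x : ℝ) (hx : 1 < x) (ℓ : ℕ) (hℓ : 1 ≤ ℓ) :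
    (Set.ncard {n : ℕ | 0 < n ∧ Odd n ∧ (n.totient : ℝ) ≤ x ∧ n.totient ∈ totVl ℓ} ≤
      Set.ncard {n : ℕ | 0 < n ∧ Even n ∧ (n.totient : ℝ) ≤ x ∧ n.totient ∈ totVl ℓ}) ∧
    (∀ n : ℕ, 0 < n → Even n → n.totient ∈ totVl ℓ →
      (2 * n).totient = 2 * n.totient ∧ 2 * n.totient ∈ totVl (ℓ + 1)) ∧
    (totS ℓ x : ℝ) / 2 ≤ (totS (ℓ + 1) (2 * x) : ℝ) :=
  stmt_16_general x ℓ
end
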